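/- If a configuration C'' is connected and contractible, and C' = C'' \ {x} is obtained by deleting a cell x that is a leaf of C'', then C' is contractible (has no holes): any hole H of C' would imply that H or H \ {x} is a hole of C'', a contradiction. -/
import Mathlib


/-- Two grid cells are adjacent if their L1 (Manhattan) distance is 1. -/
def gridAdj (p q : ℤ × ℤ) : Prop :=
  |p.1 - q.1| + |p.2 - q.2| = 1

/-- Reachability within a set `S` of cells, along grid adjacency. -/
inductive ReachIn (S : Set (ℤ × ℤ)) : ℤ × ℤ → ℤ × ℤ → Prop
  | refl {p : ℤ × ℤ} (hp : p ∈ S) : ReachIn S p p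
  | tail {p q r : ℤ × ℤ} (h : ReachIn S p q) (hadj : gridAdj q r) (hr : r ∈ S) :
      ReachIn S p r

/-- A set of cells is connected (as induced subgraph of the grid). -/
def ConnectedConf (C : Set (ℤ × ℤ)) : Prop :=
  C.Nonempty ∧ ∀ p ∈ C, ∀ q ∈ C, ReachIn C p q

/-- A configuration is contractible if the subgraph of the grid induced by its
complement is connected. -/
def Contractible (C : Set (ℤ × ℤ)) : Prop :=
  ∀ p ∈ Cᶜ, ∀ q ∈ Cᶜ, ReachIn Cᶜ p q

/-- A leaf: a cell of `C` with exactly one neighbor in `C`. -/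
def IsLeaf (C : Set (ℤ × ℤ)) (v : ℤ × ℤ) : Prop :=
  v ∈ C ∧ ∃! w, w ∈ C ∧ gridAdj v w

/-- A NE-corner: a cell of `C` whose neighbors in `C` are exactly the cells
South and West of it. -/
def IsNECorner (C : Set (ℤ × ℤ)) (v : ℤ × ℤ) : Prop :=
  v ∈ C ∧ (v.1 - 1, v.2) ∈ C ∧ (v.1, v.2 - 1) ∈ C ∧
    (v.1 + 1, v.2) ∉ C ∧ (v.1, v.2 + 1) ∉ C

/-- A NW-corner: a cell of `C` whose neighbors in `C` are exactly the cells
South and East of it. -/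
def IsNWCorner (C : Set (ℤ × ℤ)) (v : ℤ × ℤ) : Prop :=
  v ∈ C ∧ (v.1 + 1, v.2) ∈ C ∧ (v.1, v.2 - 1) ∈ C ∧
    (v.1 - 1, v.2) ∉ C ∧ (v.1, v.2 + 1) ∉ C

/-- A hole of `C`: a finite connected component of the complement of `C`. -/
def IsHole (C H : Set (ℤ × ℤ)) : Prop :=
  H.Finite ∧ ∃ p ∈ Cᶜ, H = {q | ReachIn Cᶜ p q}

/-- One elimination step: remove a leaf, or a NE-corner belonging to a 4-cycle,
or a NW-corner belonging to a 4-cycle. -/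
def ElimStep (C D : Set (ℤ × ℤ)) : Prop :=
  ∃ v, D = C \ {v} ∧
    (IsLeaf C v ∨ (IsNECorner C v ∧ (v.1 - 1, v.2 - 1) ∈ C) ∨
      (IsNWCorner C v ∧ (v.1 + 1, v.2 - 1) ∈ C))

lemma gridAdj.symm' {p q : ℤ × ℤ} (h : gridAdj p q) : gridAdj q p := by
  unfold gridAdj at *
  rw [abs_sub_comm, abs_sub_comm q.2 p.2]; exact h

lemma ReachIn.mem_right {S : Set (ℤ × ℤ)} {p q : ℤ × ℤ} (h : ReachIn S p q) : q ∈ S := by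
  induction h with
  | refl hp => exact hp
  | tail _ _ hr _ => exact hr

lemma ReachIn.mem_left {S : Set (ℤ × ℤ)} {p q : ℤ × ℤ} (h : ReachIn S p q) : p ∈ S := by
  induction h with
  | refl hp => exact hp
  | tail _ _ _ ih => exact ih

lemma ReachIn.trans {S : Set (ℤ × ℤ)} {p q r : ℤ × ℤ} (h1 : ReachIn S p q)
    (h2 : ReachIn S q r) : ReachIn S p r := by
  induction h2 with
  | refl _ => exact h1
  | tail _ hadj hr ih => exact ReachIn.tail ih hadj hr

lemma ReachIn.symm {S : Set (ℤ × ℤ)} {p q : ℤ × ℤ} (h : ReachIn S p q) : ReachIn S q p := by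
  induction h with
  | refl hp => exact ReachIn.refl hp
  | tail h hadj _ ih =>
      exact ReachIn.trans (ReachIn.tail (ReachIn.refl (by assumption))
        hadj.symm' (ReachIn.mem_right h)) ih

lemma ReachIn.mono {S T : Set (ℤ × ℤ)} (hST : S ⊆ T) {p q : ℤ × ℤ}
    (h : ReachIn S p q) : ReachIn T p q := by
  induction h with
  | refl hp => exact ReachIn.refl (hST hp)
  | tail _ hadj hr ih => exact ReachIn.tail ih hadj (hST hr)

/-- Deleting a leaf from a finite connected contractible configuration yields a
contractible configuration (no holes are created). -/
theorem leaf_removal_contractible (C'' : Set (ℤ × ℤ)) (hfin : C''.Finite)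
    (hconn : ConnectedConf C'') (hcontr : Contractible C'')
    (x : ℤ × ℤ) (hx : IsLeaf C'' x) :
    Contractible (C'' \ {x}) := by
  obtain ⟨hxC, w0, hw0, huniq⟩ := hx
  -- find a neighbor of x not in C''
  have hadj1 : gridAdj x (x.1 + 1, x.2) := by simp [gridAdj]
  have hadj2 : gridAdj x (x.1 - 1, x.2) := by simp [gridAdj]
  have hne : (x.1 + 1, x.2) ≠ ((x.1 - 1, x.2) : ℤ × ℤ) := by
    intro h; have := congrArg Prod.fst h; simp at this; omega
  have hw : ∃ w, w ∈ C''ᶜ ∧ gridAdj x w := by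
    by_cases h1 : (x.1 + 1, x.2) ∈ C''
    · by_cases h2 : (x.1 - 1, x.2) ∈ C''
      · exact absurd ((huniq _ ⟨h1, hadj1⟩).trans (huniq _ ⟨h2, hadj2⟩).symm) hne
      · exact ⟨_, h2, hadj2⟩
    · exact ⟨_, h1, hadj1⟩
  obtain ⟨w, hwc, hxw⟩ := hw
  set S := (C'' \ {x})ᶜ with hS
  have hsub : C''ᶜ ⊆ S := by
    intro p hp; simp [hS, Set.mem_compl_iff, Set.mem_diff] at *; tauto
  have hxS : x ∈ S := by simp [hS]
  have key : ∀ p ∈ S, ReachIn S p w := by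
    intro p hp
    simp only [hS, Set.mem_compl_iff, Set.mem_diff, Set.mem_singleton_iff, not_and,
      not_not] at hp
    by_cases hpx : p = x
    · subst hpx; exact ReachIn.tail (ReachIn.refl hxS) hxw (hsub hwc)
    · exact (hcontr p (fun h => hpx (hp h)) w hwc).mono hsub
  intro p hp q hq
  exact (key p hp).trans (key q hq).symm
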